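/- Let A, B, C, D : ℕ → ℚ[X] be four Appell sequences and let n ≥ 3. For natural numbers i₁, i₂, i₃ let Δ(i₁,i₂,i₃) ∈ ℚ[X] be the determinant of the 3×3 matrix with rows ( [n]_{i₁}·(B i₁), [n]_{i₂}·(C i₂), [n]_{i₃}·(D i₃) ), ( [n−1]_{i₁}·(B (i₁+1)), [n−1]_{i₂}·(C (i₂+1)), [n−1]_{i₃}·(D (i₃+1)) ), ( [n−2]_{i₁}·(B (i₁+2)), [n−2]_{i₂}·(C (i₂+2)), [n−2]_{i₃}·(D (i₃+2)) ). Then the polynomial Ch_n(A,B,C,D) := ∑_{i=0}^{n} ((−1)^i / [3n−6]_i) · Cb(n,i) · (A (n−i)) · ∑_{i₁+i₂+i₃=i} (i! / (i₁!·i₂!·i₃!)) · Δ(i₁,i₂,i₃) ∈ ℚ[X] is constant, i.e. it equals Polynomial.C of its value at 0. -/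

import Mathlib

/-!
Write `Sᵢ = ∑_{i₁+i₂+i₃=i} (i!/(i₁! i₂! i₃!)) Δ(i₁,i₂,i₃)`. By the Appell property the
derivative of the column of `Δ` at index `a` is `a` times a modified column at index `a - 1`,
up to a part that only produces determinants with two equal rows. The three modifications add
up, through `trace (diagonal ![0, 1, 2]) = 3`, to a multiple of `Δ` itself, and the multinomial
weights absorb the factors `a`: this gives `S₀' = 0` and `S_{i+1}' = (i+1)(3n-6-i) Sᵢ`.
Together with `A_{n-i}' = (n-i) A_{n-i-1}` the derivative of `∑ cᵢ A_{n-i} Sᵢ` telescopes, and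
the coefficients `cᵢ = (-1)ⁱ C(n,i) / [3n-6]ᵢ` are exactly those with
`cᵢ (n-i) + c_{i+1} (i+1)(3n-6-i) = 0`.
-/

open Polynomial Finset Matrix
open scoped Nat

namespace Appell

variable {R : Type*} [CommRing R]

-- `W *ᵥ v` multiplies row `r` of `v` by `r`; the `6` in `3n - 6` is `2 * trace W`.
local notation "W" => diagonal ![0, 1, 2]

lemma cast_descFactorial_succ (m j : ℕ) :
    (m.descFactorial (j + 1) : R) = ((m : R) - j) * m.descFactorial j := by
  rcases le_or_gt j m with h | h
  · rw [Nat.descFactorial_succ, Nat.cast_mul, Nat.cast_sub h]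
  · simp [Nat.descFactorial_eq_zero_iff_lt.2 h]

lemma sum_det_mulVec_row_eq_trace_mul_det {S : Type*} [CommRing S] (K : Matrix (Fin 3) (Fin 3) S)
    (u v w : Fin 3 → S) :
    (of ![K *ᵥ u, v, w]).det + (of ![u, K *ᵥ v, w]).det + (of ![u, v, K *ᵥ w]).det
      = K.trace * (of ![u, v, w]).det := by
  simp only [det_fin_three, of_apply, cons_val', mulVec, dotProduct, Fin.sum_univ_three,
    cons_val_fin_one, cons_val_zero, cons_val_one, Matrix.cons_val, trace, diag_apply]
  ring

section Multinomial

variable {M : Type*} [AddCommGroup M] [Module ℚ M]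

def multinomialSum (F : ℕ → ℕ → ℕ → M) (i : ℕ) : M :=
  ∑ p ∈ antidiagonal i, ∑ q ∈ antidiagonal p.2,
    ((i ! : ℚ) / ((p.1 ! : ℚ) * (q.1 ! : ℚ) * (q.2 ! : ℚ))) • F p.1 q.1 q.2

lemma multinomialSum_add (F G : ℕ → ℕ → ℕ → M) (i : ℕ) :
    multinomialSum (fun a b c => F a b c + G a b c) i
      = multinomialSum F i + multinomialSum G i := by
  simp only [multinomialSum, smul_add, sum_add_distrib]

lemma multinomialSum_smul_total (f : ℕ → ℚ) (F : ℕ → ℕ → ℕ → M) (i : ℕ) :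
    multinomialSum (fun a b c => f (a + b + c) • F a b c) i = f i • multinomialSum F i := by
  simp only [multinomialSum, smul_sum, smul_comm (f _)]
  refine sum_congr rfl fun p hp => sum_congr rfl fun q hq => ?_
  rw [HasAntidiagonal.mem_antidiagonal] at hp hq
  rw [add_assoc, hq, hp]

lemma map_multinomialSum {N : Type*} [AddCommGroup N] [Module ℚ N] (L : M →ₗ[ℚ] N)
    (F : ℕ → ℕ → ℕ → M) (i : ℕ) :
    L (multinomialSum F i) = multinomialSum (fun a b c => L (F a b c)) i := by
  simp only [multinomialSum, map_sum, map_smul]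

lemma multinomialSum_succ_smul_fst (F : ℕ → ℕ → ℕ → M) (i : ℕ) :
    multinomialSum (fun a b c => (a : ℚ) • F (a - 1) b c) (i + 1)
      = ((i : ℚ) + 1) • multinomialSum F i := by
  rw [multinomialSum, Nat.sum_antidiagonal_succ, multinomialSum, smul_sum]
  simp only [CharP.cast_eq_zero, zero_smul, smul_zero, sum_const_zero, zero_add,
    Nat.add_sub_cancel, smul_smul, smul_sum]
  refine sum_congr rfl fun p _ => sum_congr rfl fun q _ => ?_
  congr 1
  push_cast [Nat.factorial_succ]
  field_simp

lemma multinomialSum_succ_smul_snd (F : ℕ → ℕ → ℕ → M) (i : ℕ) :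
    multinomialSum (fun a b c => (b : ℚ) • F a (b - 1) c) (i + 1)
      = ((i : ℚ) + 1) • multinomialSum F i := by
  rw [multinomialSum, Nat.sum_antidiagonal_succ', multinomialSum, smul_sum]
  simp only [Nat.antidiagonal_zero, sum_singleton, CharP.cast_eq_zero, zero_smul, smul_zero,
    zero_add]
  refine sum_congr rfl fun p _ => ?_
  rw [Nat.sum_antidiagonal_succ, smul_sum]
  simp only [CharP.cast_eq_zero, zero_smul, smul_zero, zero_add, Nat.add_sub_cancel, smul_smul]
  refine sum_congr rfl fun q _ => ?_
  congr 1
  push_cast [Nat.factorial_succ]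
  field_simp

lemma multinomialSum_succ_smul_thd (F : ℕ → ℕ → ℕ → M) (i : ℕ) :
    multinomialSum (fun a b c => (c : ℚ) • F a b (c - 1)) (i + 1)
      = ((i : ℚ) + 1) • multinomialSum F i := by
  rw [multinomialSum, Nat.sum_antidiagonal_succ', multinomialSum, smul_sum]
  simp only [Nat.antidiagonal_zero, sum_singleton, CharP.cast_eq_zero, zero_smul, smul_zero,
    zero_add]
  refine sum_congr rfl fun p _ => ?_
  rw [Nat.sum_antidiagonal_succ', smul_sum]
  simp only [CharP.cast_eq_zero, zero_smul, smul_zero, zero_add, Nat.add_sub_cancel, smul_smul]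
  refine sum_congr rfl fun q _ => ?_
  congr 1
  push_cast [Nat.factorial_succ]
  field_simp

lemma multinomialSum_zero (F : ℕ → ℕ → ℕ → M) : multinomialSum F 0 = F 0 0 0 := by
  simp [multinomialSum]

end Multinomial

section AppellSequence

def IsAppell (X : ℕ → R[X]) : Prop :=
  derivative (X 0) = 0 ∧ ∀ k : ℕ, derivative (X (k + 1)) = (k + 1) • X k

lemma IsAppell.derivative_succ {X : ℕ → R[X]} (hX : IsAppell X) (k : ℕ) :
    derivative (X (k + 1)) = ((k : R) + 1) • X k := by
  rw [hX.2 k, ← Nat.cast_smul_eq_nsmul R, Nat.cast_succ]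

lemma IsAppell.derivative_eq {X : ℕ → R[X]} (hX : IsAppell X) (m : ℕ) :
    derivative (X m) = (m : R) • X (m - 1) := by
  rcases m with _ | k
  · simp [hX.1]
  · simpa using hX.derivative_succ k

lemma derivative_sum_smul_mul_eq_zero {A S : ℕ → R[X]} (hA : IsAppell A) {c μ : ℕ → R}
    {n : ℕ} (hS0 : derivative (S 0) = 0) (hS : ∀ k, derivative (S (k + 1)) = μ k • S k)
    (hc : ∀ k < n, c k * (n - k : ℕ) + c (k + 1) * μ k = 0) :
    derivative (∑ i ∈ range (n + 1), c i • (A (n - i) * S i)) = 0 := by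
  simp only [derivative_sum, derivative_smul, derivative_mul, hA.derivative_eq, smul_add,
    sum_add_distrib]
  rw [sum_range_succ, sum_range_succ' (fun i => c i • (A (n - i) * derivative (S i)))]
  simp only [Nat.sub_self, Nat.cast_zero, zero_smul, zero_mul, smul_zero, add_zero, hS0,
    mul_zero, hS, ← sum_add_distrib]
  refine sum_eq_zero fun k hk => ?_
  rw [Nat.sub_sub, smul_mul_assoc, mul_smul_comm, smul_smul, smul_smul, ← add_smul,
    hc k (mem_range.1 hk), zero_smul]

end AppellSequence

section Determinant

noncomputable def entry (n : ℕ) (X : ℕ → R[X]) (r a : ℕ) : R[X] :=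
  ((n - r).descFactorial a : R) • X (a + r)

lemma derivative_entry {X : ℕ → R[X]} (hX : IsAppell X) {n r : ℕ} (hr : r ≤ n) (a : ℕ) :
    derivative (entry n X r a) = (r : R) • entry n X (r - 1) a
      + ((a : R) * (n - (a - 1 : ℕ) - 2 * r)) • entry n X r (a - 1) := by
  obtain ⟨m, rfl⟩ := Nat.exists_eq_add_of_le' hr
  rcases r with _ | r <;> rcases a with _ | a
  · simp [entry, hX.1]
  · simp only [entry, Nat.sub_zero, add_zero, Nat.add_sub_cancel, derivative_smul,
      hX.derivative_succ, smul_smul, Nat.cast_zero, zero_mul, zero_smul, zero_add,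
      cast_descFactorial_succ]
    congr 1
    push_cast
    ring
  · simp only [entry, Nat.descFactorial_zero, one_smul, zero_add, Nat.cast_zero,
      zero_mul, zero_smul, add_zero, Nat.add_sub_cancel, hX.derivative_succ, Nat.cast_succ]
  · have hm : m + (r + 1) - r = m + 1 := by omega
    simp only [entry, Nat.add_sub_cancel, hm, derivative_smul,
      show a + 1 + (r + 1) = (a + 1 + r) + 1 by ring, hX.derivative_succ, smul_smul, ← add_smul,
      show a + (r + 1) = a + 1 + r by ring, Nat.succ_descFactorial_succ, cast_descFactorial_succ]
    congr 1
    push_cast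
    ring

noncomputable def appellCol (n : ℕ) (X : ℕ → R[X]) (a : ℕ) : Fin 3 → R[X] :=
  fun r => entry n X r a

noncomputable def appellDet (n : ℕ) (B C D : ℕ → R[X]) (a b c : ℕ) : R[X] :=
  (of ![appellCol n B a, appellCol n C b, appellCol n D c]).det

noncomputable def appellDetDerivFst (n : ℕ) (B C D : ℕ → R[X]) (a b c : ℕ) : R[X] :=
  (n - a : R) • appellDet n B C D a b c
    - 2 • (of ![W *ᵥ appellCol n B a, appellCol n C b, appellCol n D c]).det

noncomputable def appellDetDerivSnd (n : ℕ) (B C D : ℕ → R[X]) (a b c : ℕ) : R[X] :=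
  (n - b : R) • appellDet n B C D a b c
    - 2 • (of ![appellCol n B a, W *ᵥ appellCol n C b, appellCol n D c]).det

noncomputable def appellDetDerivThd (n : ℕ) (B C D : ℕ → R[X]) (a b c : ℕ) : R[X] :=
  (n - c : R) • appellDet n B C D a b c
    - 2 • (of ![appellCol n B a, appellCol n C b, W *ᵥ appellCol n D c]).det

variable {n : ℕ} {B C D : ℕ → R[X]}

/- Differentiating row `r` of the column at index `a` gives `r` times its row `r - 1`, whose
contribution is a determinant with two equal rows, plus `a (n + 1 - a - 2r)` times row `r` of
the column at index `a - 1`. -/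
lemma derivative_appellDet (hB : IsAppell B) (hC : IsAppell C) (hD : IsAppell D) (hn : 2 ≤ n)
    (a b c : ℕ) :
    derivative (appellDet n B C D a b c) =
      (a : R) • appellDetDerivFst n B C D (a - 1) b c
        + (b : R) • appellDetDerivSnd n B C D a (b - 1) c
        + (c : R) • appellDetDerivThd n B C D a b (c - 1) := by
  have h0 : 0 ≤ n := Nat.zero_le n
  have h1 : 1 ≤ n := by omega
  simp only [appellDetDerivFst, appellDetDerivSnd, appellDetDerivThd, appellDet, appellCol,
    det_fin_three, of_apply, cons_val_zero, cons_val_one, cons_val_two, head_cons, tail_cons,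
    mulVec_diagonal, Fin.val_zero, Fin.val_one, Fin.val_two, Fin.isValue, derivative_add,
    derivative_mul, derivative_entry hB h0, derivative_entry hB h1, derivative_entry hB hn,
    derivative_entry hC h0, derivative_entry hC h1, derivative_entry hC hn,
    derivative_entry hD h0, derivative_entry hD h1, derivative_entry hD hn, smul_eq_C_mul,
    nsmul_eq_mul, Nat.cast_zero, Nat.cast_one, Nat.cast_ofNat, Nat.sub_self,
    show 2 - 1 = 1 from rfl, map_zero, map_one, zero_mul, zero_add, map_sub, map_mul,
    map_natCast, map_ofNat]
  ring

lemma appellDetDerivFst_add_snd_add_thd (a b c : ℕ) :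
    appellDetDerivFst n B C D a b c + appellDetDerivSnd n B C D a b c
        + appellDetDerivThd n B C D a b c
      = (3 * n - 6 - (a + b + c : ℕ) : R) • appellDet n B C D a b c := by
  have hW := sum_det_mulVec_row_eq_trace_mul_det W (appellCol n B a) (appellCol n C b)
    (appellCol n D c)
  have htr : trace (W : Matrix (Fin 3) (Fin 3) R[X]) = 3 := by
    rw [trace_diagonal, Fin.sum_univ_three]
    norm_num [cons_val_two]
  rw [htr] at hW
  simp only [appellDetDerivFst, appellDetDerivSnd, appellDetDerivThd, appellDet, smul_eq_C_mul,
    nsmul_eq_mul, map_sub, map_natCast, map_ofNat, map_mul] at hW ⊢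
  push_cast
  linear_combination (-2 : R[X]) * hW

end Determinant

noncomputable def chCoeff (n i : ℕ) : ℚ :=
  (-1) ^ i / ((3 * n - 6).descFactorial i : ℚ) * n.choose i

lemma chCoeff_recurrence {n k : ℕ} (hn : 3 ≤ n) (hk : k < n) :
    chCoeff n k * (n - k : ℕ) + chCoeff n (k + 1) * ((k + 1) * (3 * n - 6 - k)) = 0 := by
  have hdesc : ((3 * n - 6).descFactorial (k + 1) : ℚ)
      = (3 * n - 6 - k) * (3 * n - 6).descFactorial k := by
    rw [cast_descFactorial_succ, Nat.cast_sub (by omega)]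
    push_cast
    ring
  have hchoose : (n.choose (k + 1) : ℚ) * (k + 1) = n.choose k * (n - k : ℕ) := by
    exact_mod_cast Nat.choose_succ_right_eq n k
  have hdesc_ne : ((3 * n - 6).descFactorial k : ℚ) ≠ 0 := by
    exact_mod_cast (Nat.descFactorial_pos.2 (by omega)).ne'
  have hgap : (3 * n - 6 - k : ℚ) ≠ 0 := by
    have : (k : ℚ) + 1 ≤ n := by exact_mod_cast hk
    have : (3 : ℚ) ≤ n := by exact_mod_cast hn
    intro h
    linarith
  rw [chCoeff, chCoeff, hdesc, pow_succ]
  field_simp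
  rw [hchoose]
  ring

section Rational

lemma appellDet_eq_det (n : ℕ) (B C D : ℕ → ℚ[X]) (i₁ i₂ i₃ : ℕ) :
    appellDet n B C D i₁ i₂ i₃ = Matrix.det
      !![(Nat.descFactorial n i₁ : ℚ) • B i₁,
          (Nat.descFactorial n i₂ : ℚ) • C i₂,
          (Nat.descFactorial n i₃ : ℚ) • D i₃;
        (Nat.descFactorial (n - 1) i₁ : ℚ) • B (i₁ + 1),
          (Nat.descFactorial (n - 1) i₂ : ℚ) • C (i₂ + 1),
          (Nat.descFactorial (n - 1) i₃ : ℚ) • D (i₃ + 1);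
        (Nat.descFactorial (n - 2) i₁ : ℚ) • B (i₁ + 2),
          (Nat.descFactorial (n - 2) i₂ : ℚ) • C (i₂ + 2),
          (Nat.descFactorial (n - 2) i₃ : ℚ) • D (i₃ + 2)] := by
  rw [appellDet, ← det_transpose]
  congr 1
  ext r j
  fin_cases r <;> fin_cases j <;> simp [appellCol, entry]

variable {n : ℕ} {B C D : ℕ → ℚ[X]}

lemma derivative_multinomialSum_appellDet_zero (hB : IsAppell B) (hC : IsAppell C)
    (hD : IsAppell D) (hn : 2 ≤ n) :
    derivative (multinomialSum (appellDet n B C D) 0) = 0 := by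
  simp [multinomialSum_zero, derivative_appellDet hB hC hD hn]

lemma derivative_multinomialSum_appellDet_succ (hB : IsAppell B) (hC : IsAppell C)
    (hD : IsAppell D) (hn : 2 ≤ n) (i : ℕ) :
    derivative (multinomialSum (appellDet n B C D) (i + 1))
      = (((i : ℚ) + 1) * (3 * n - 6 - i)) • multinomialSum (appellDet n B C D) i := by
  rw [map_multinomialSum (derivative (R := ℚ))]
  simp_rw [derivative_appellDet hB hC hD hn]
  rw [multinomialSum_add, multinomialSum_add, multinomialSum_succ_smul_fst,
    multinomialSum_succ_smul_snd, multinomialSum_succ_smul_thd, ← smul_add, ← smul_add,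
    ← multinomialSum_add, ← multinomialSum_add]
  simp_rw [appellDetDerivFst_add_snd_add_thd]
  rw [multinomialSum_smul_total (fun t : ℕ => (3 * n - 6 - t : ℚ)), smul_smul]

end Rational

end Appell

open Appell in
/-- For four Appell sequences `A`, `B`, `C`, `D` and `n ≥ 3`, the joint
semi-invariant expression
`Ch_n(A,B,C,D) = ∑_{i=0}^{n} ((−1)^i/[3n−6]_i) C(n,i) A_{n−i}
  ∑_{i₁+i₂+i₃=i} (i!/(i₁! i₂! i₃!)) Δ(i₁,i₂,i₃)`,
where `Δ(i₁,i₂,i₃)` is the indicated `3×3` determinant, is constant, equal to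
`Polynomial.C` of its value at `0`. -/
theorem Ch_four_constant
    (A B C D : ℕ → Polynomial ℚ)
    (hA0 : Polynomial.derivative (A 0) = 0)
    (hA : ∀ k : ℕ, Polynomial.derivative (A (k + 1)) = (k + 1) • A k)
    (hB0 : Polynomial.derivative (B 0) = 0)
    (hB : ∀ k : ℕ, Polynomial.derivative (B (k + 1)) = (k + 1) • B k)
    (hC0 : Polynomial.derivative (C 0) = 0)
    (hC : ∀ k : ℕ, Polynomial.derivative (C (k + 1)) = (k + 1) • C k)
    (hD0 : Polynomial.derivative (D 0) = 0)
    (hD : ∀ k : ℕ, Polynomial.derivative (D (k + 1)) = (k + 1) • D k)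
    (n : ℕ) (hn : 3 ≤ n)
    (Δ : ℕ → ℕ → ℕ → Polynomial ℚ)
    (hΔ : ∀ i₁ i₂ i₃, Δ i₁ i₂ i₃ = Matrix.det
      !![(Nat.descFactorial n i₁ : ℚ) • B i₁,
          (Nat.descFactorial n i₂ : ℚ) • C i₂,
          (Nat.descFactorial n i₃ : ℚ) • D i₃;
        (Nat.descFactorial (n - 1) i₁ : ℚ) • B (i₁ + 1),
          (Nat.descFactorial (n - 1) i₂ : ℚ) • C (i₂ + 1),
          (Nat.descFactorial (n - 1) i₃ : ℚ) • D (i₃ + 1);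
        (Nat.descFactorial (n - 2) i₁ : ℚ) • B (i₁ + 2),
          (Nat.descFactorial (n - 2) i₂ : ℚ) • C (i₂ + 2),
          (Nat.descFactorial (n - 2) i₃ : ℚ) • D (i₃ + 2)])
    (T : Polynomial ℚ)
    (hT : T = ∑ i ∈ Finset.range (n + 1),
        (((-1 : ℚ) ^ i / (Nat.descFactorial (3 * n - 6) i : ℚ)) * (n.choose i)) •
          (A (n - i) *
            ∑ p ∈ Finset.HasAntidiagonal.antidiagonal i, ∑ q ∈ Finset.HasAntidiagonal.antidiagonal p.2,
              ((i.factorial : ℚ) /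
                  ((p.1.factorial : ℚ) * (q.1.factorial : ℚ) * (q.2.factorial : ℚ))) •
                Δ p.1 q.1 q.2)) :
    T = Polynomial.C (T.eval 0) := by
  obtain rfl : Δ = appellDet n B C D := by
    funext a b c
    rw [hΔ, appellDet_eq_det]
  have hB' : IsAppell B := ⟨hB0, hB⟩
  have hC' : IsAppell C := ⟨hC0, hC⟩
  have hD' : IsAppell D := ⟨hD0, hD⟩
  have hT' : derivative T = 0 := by
    rw [hT]
    exact derivative_sum_smul_mul_eq_zero (c := chCoeff n) ⟨hA0, hA⟩
      (derivative_multinomialSum_appellDet_zero hB' hC' hD' (by omega))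
      (derivative_multinomialSum_appellDet_succ hB' hC' hD' (by omega))
      (fun k hk => chCoeff_recurrence hn hk)
  rw [← coeff_zero_eq_eval_zero]
  exact eq_C_of_derivative_eq_zero hT'
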